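/- Let f : ℤ² → {contact elements} be a discrete Legendre map such that for every n ∈ ℤ the subspace Σₙ := span{s⁻(m,n) : m ∈ ℤ} is 3-dimensional. Then f is a discrete channel surface with circular direction '+' if and only if (a) s⁺(m,n) = s⁺(m',n) for all m, m', n ∈ ℤ (the horizontal curvature spheres are constant along each '+'-coordinate line), and (b) for every n ∈ ℤ the bilinear form restricted to Σₙ is nondegenerate of signature (2,1), i.e., the vertical curvature spheres along each '+'-coordinate ribbon determine a (2,1)-plane. -/

import Mathlib

noncomputable section

/-- The Lie sphere geometric model: `ℝ^{4,2}`. -/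
abbrev V6 : Type := Fin 6 → ℝ

/-- The symmetric bilinear form of signature `(4,2)` on `V6`. -/
def B (x y : V6) : ℝ :=
  x 0 * y 0 + x 1 * y 1 + x 2 * y 2 + x 3 * y 3 - x 4 * y 4 - x 5 * y 5

/-- An oriented sphere: a 1-dimensional isotropic subspace. -/
def IsSphere (S : Submodule ℝ V6) : Prop :=
  Module.finrank ℝ S = 1 ∧ ∀ x ∈ S, B x x = 0

/-- A contact element: a 2-dimensional totally isotropic subspace. -/
def IsContact (W : Submodule ℝ V6) : Prop :=
  Module.finrank ℝ W = 2 ∧ ∀ x ∈ W, ∀ y ∈ W, B x y = 0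

/-- A `(2,1)`-plane: 3-dim subspace on which the form is nondegenerate of signature `(2,1)`. -/
def IsSig21 (D : Submodule ℝ V6) : Prop :=
  ∃ u v w : V6, D = Submodule.span ℝ {u, v, w} ∧
    B u u = 1 ∧ B v v = 1 ∧ B w w = -1 ∧ B u v = 0 ∧ B u w = 0 ∧ B v w = 0

/-- A Dupin cyclide: a pair of `(2,1)`-planes, the second the orthogonal complement of the first. -/
def IsDupin (D E : Submodule ℝ V6) : Prop :=
  IsSig21 D ∧ IsSig21 E ∧ ∀ x : V6, x ∈ E ↔ ∀ y ∈ D, B x y = 0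

/-- Horizontal curvature sphere on the edge from `(m,n)` to `(m+1,n)`. -/
def sPlus (f : ℤ × ℤ → Submodule ℝ V6) (m n : ℤ) : Submodule ℝ V6 :=
  f (m, n) ⊓ f (m + 1, n)

/-- Vertical curvature sphere on the edge from `(m,n)` to `(m,n+1)`. -/
def sMinus (f : ℤ × ℤ → Submodule ℝ V6) (m n : ℤ) : Submodule ℝ V6 :=
  f (m, n) ⊓ f (m, n + 1)

/-- A discrete Legendre map. -/
def IsLegendre (f : ℤ × ℤ → Submodule ℝ V6) : Prop :=
  (∀ p : ℤ × ℤ, IsContact (f p)) ∧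
  (∀ m n : ℤ, Module.finrank ℝ (sPlus f m n) = 1) ∧
  (∀ m n : ℤ, Module.finrank ℝ (sMinus f m n) = 1)

/-- A face-cyclide congruence for `f`. -/
def IsFaceCyclideCongruence (f D E : ℤ × ℤ → Submodule ℝ V6) : Prop :=
  ∀ m n : ℤ,
    IsDupin (D (m, n)) (E (m, n)) ∧
    sPlus f m n ≤ D (m, n) ∧ sPlus f m (n + 1) ≤ D (m, n) ∧
    sMinus f m n ≤ E (m, n) ∧ sMinus f (m + 1) n ≤ E (m, n)

/-- A discrete channel surface with circular direction `+`. -/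
def IsChannelPlus (f : ℤ × ℤ → Submodule ℝ V6) : Prop :=
  IsLegendre f ∧
  ∃ D E : ℤ × ℤ → Submodule ℝ V6,
    IsFaceCyclideCongruence f D E ∧
    ∀ m m' n : ℤ, D (m, n) = D (m', n) ∧ E (m, n) = E (m', n)

/-- The orthogonal complement of a point sphere complex `p`. -/
def pPerp (p : V6) : Submodule ℝ V6 where
  carrier := {x | B x p = 0}
  add_mem' := by
    intro a b ha hb
    simp only [Set.mem_setOf_eq, B, Pi.add_apply] at *
    linear_combination ha + hb
  zero_mem' := by simp [B]
  smul_mem' := by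
    intro c x hx
    simp only [Set.mem_setOf_eq, B, Pi.smul_apply, smul_eq_mul] at *
    linear_combination c * hx

/-!
Everything rests on two facts about a `(2,1)`-plane `D` in `ℝ^{4,2}`: it contains no isotropic
plane, because it contains a positive definite plane; and `D^⊥` is again a `(2,1)`-plane. For the
latter, `ℝ^{4,2} = D ⊕ D^⊥`, so `D^⊥` has an orthogonal basis of vectors of square `±1`; as a
positive (negative) definite subspace of `ℝ^{4,2}` has dimension at most `4` (`2`), together with
the basis of `D` it must contain exactly two positive vectors and one negative one.

If the cyclides do not depend on `m`, the spheres `s⁺(m,n)` and `s⁺(m+1,n)` both lie in the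
isotropic subspace `f(m+1,n) ∩ D⁺(n)` of dimension at most one, hence coincide, and
`Σₙ ≤ D⁻(n)` is an equality by dimension. Conversely `D⁻ := Σₙ`, `D⁺ := Σₙ^⊥` is a Lie cyclide
congruence: `s⁺(m,n) = s⁺(m',n)` and `s⁻(m',n)` lie in the common contact element `f(m',n)`.
-/

open Module Submodule

lemma B_comm (x y : V6) : B x y = B y x := by unfold B; ring

def Bₗ : LinearMap.BilinForm ℝ V6 :=
  LinearMap.mk₂ ℝ B
    (fun x y z => by simp only [B, Pi.add_apply]; ring)
    (fun c x y => by simp only [B, Pi.smul_apply, smul_eq_mul]; ring)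
    (fun x y z => by simp only [B, Pi.add_apply]; ring)
    (fun c x y => by simp only [B, Pi.smul_apply, smul_eq_mul]; ring)

@[simp] lemma Bₗ_apply (x y : V6) : Bₗ x y = B x y := rfl

lemma Bₗ_isSymm : Bₗ.IsSymm := ⟨fun x y => B_comm x y⟩

lemma Bₗ_nondegenerate : Bₗ.Nondegenerate := by
  refine LinearMap.BilinForm.Nondegenerate.ofSeparatingLeft fun x hx => funext fun i => ?_
  have := hx (Pi.single i 1)
  fin_cases i <;> simpa [B] using this

section PosDefOn

variable {M : Type*} [AddCommGroup M] [Module ℝ M]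

def PosDefOn (Q : LinearMap.BilinForm ℝ M) (S : Submodule ℝ M) : Prop :=
  ∀ x ∈ S, x ≠ 0 → 0 < Q x x

lemma apply_sum_smul_self_of_isOrthoᵢ {ι : Type*} [Fintype ι] {Q : LinearMap.BilinForm ℝ M}
    {e : ι → M} (ho : Q.IsOrthoᵢ e) (c : ι → ℝ) :
    Q (∑ i, c i • e i) (∑ i, c i • e i) = ∑ i, c i ^ 2 * Q (e i) (e i) := by
  classical
  simp only [map_sum, map_smul, LinearMap.sum_apply, LinearMap.smul_apply, smul_eq_mul]
  refine Finset.sum_congr rfl fun i _ => ?_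
  rw [Finset.sum_eq_single i (fun j _ hji => mul_eq_zero_of_right _ (ho hji)) (by simp)]
  ring

lemma posDefOn_span_of_isOrthoᵢ {ι : Type*} [Fintype ι] {Q : LinearMap.BilinForm ℝ M}
    {e : ι → M} (ho : Q.IsOrthoᵢ e) (he : ∀ i, Q (e i) (e i) = 1) :
    PosDefOn Q (span ℝ (Set.range e)) := by
  intro x hx hx0
  obtain ⟨c, rfl⟩ := mem_span_range_iff_exists_fun ℝ |>.mp hx
  rw [apply_sum_smul_self_of_isOrthoᵢ ho]
  simp only [he, mul_one]
  refine lt_of_le_of_ne (Finset.sum_nonneg fun i _ => sq_nonneg _) fun hsum => hx0 ?_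
  have hc : ∀ i, c i = 0 := fun i => pow_eq_zero_iff two_ne_zero |>.mp <|
    (Finset.sum_eq_zero_iff_of_nonneg fun i _ => sq_nonneg (c i)).mp hsum.symm i (by simp)
  simp [hc]

lemma finrank_span_of_isOrthoᵢ {ι : Type*} [Fintype ι] {Q : LinearMap.BilinForm ℝ M}
    {e : ι → M} (ho : Q.IsOrthoᵢ e) (he : ∀ i, Q (e i) (e i) ≠ 0) :
    finrank ℝ (span ℝ (Set.range e)) = Fintype.card ι :=
  finrank_span_eq_card (LinearMap.linearIndependent_of_isOrthoᵢ ho he)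

lemma isOrthoᵢ_vecCons {Q : LinearMap.BilinForm ℝ M} (hQ : Q.IsSymm) {n : ℕ} {x : M}
    {e : Fin n → M} :
    Q.IsOrthoᵢ (Matrix.vecCons x e) ↔ (∀ i, Q x (e i) = 0) ∧ Q.IsOrthoᵢ e := by
  simp only [LinearMap.IsOrthoᵢ, pairwise_fin_succ_iff, Function.onFun,
    Matrix.cons_val_zero, Matrix.cons_val_succ, hQ.eq (e _) x]
  tauto

@[simp] lemma isOrthoᵢ_vecEmpty (Q : LinearMap.BilinForm ℝ M) : Q.IsOrthoᵢ ![] :=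
  Subsingleton.pairwise

lemma disjoint_orthogonal_span_of_isOrthoᵢ {ι : Type*} [Fintype ι] {Q : LinearMap.BilinForm ℝ M}
    {e : ι → M} (ho : Q.IsOrthoᵢ e) (he : ∀ i, Q (e i) (e i) ≠ 0) :
    Disjoint (span ℝ (Set.range e)) (Q.orthogonal (span ℝ (Set.range e))) := by
  classical
  refine disjoint_iff.mpr (eq_bot_iff.mpr fun x ⟨hx, hxo⟩ => ?_)
  obtain ⟨c, rfl⟩ := mem_span_range_iff_exists_fun ℝ |>.mp hx
  have hc : ∀ j, c j = 0 := fun j => by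
    have h := hxo (e j) (subset_span ⟨j, rfl⟩)
    simp only [map_sum, map_smul, smul_eq_mul] at h
    rw [Finset.sum_eq_single j (fun i _ hij => mul_eq_zero_of_right _ (ho hij.symm))
      (by simp)] at h
    exact (mul_eq_zero.mp h).resolve_right (he j)
  simp [hc]

lemma exists_isOrthoᵢ_sign [FiniteDimensional ℝ M] {Q : LinearMap.BilinForm ℝ M}
    (hQs : Q.IsSymm) (hQ : Q.Nondegenerate) {n : ℕ} (hn : finrank ℝ M = n) :
    ∃ e : Fin n → M, Q.IsOrthoᵢ e ∧ ∀ i, Q (e i) (e i) = 1 ∨ Q (e i) (e i) = -1 := by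
  subst hn
  obtain ⟨b, hb⟩ := LinearMap.BilinForm.exists_orthogonal_basis
    (LinearMap.BilinForm.isSymm_iff.mp hQs)
  have hb0 i : Q (b i) (b i) ≠ 0 := hb.not_isOrtho_basis_self_of_separatingLeft hQ.1 i
  refine ⟨fun i => (√|Q (b i) (b i)|)⁻¹ • b i, fun i j hij => ?_, fun i => ?_⟩
  · simp [Function.onFun, (hb hij : Q (b i) (b j) = 0)]
  · have hsq : √|Q (b i) (b i)| ^ 2 = |Q (b i) (b i)| := Real.sq_sqrt (abs_nonneg _)
    simp only [map_smul, LinearMap.smul_apply, smul_eq_mul]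
    rcases (hb0 i).lt_or_gt with hneg | hpos
    · right; field_simp; rw [hsq, abs_of_neg hneg]; simp [hb0 i]
    · left; field_simp; rw [hsq, abs_of_pos hpos]

end PosDefOn

-- The projection to the first four coordinates is injective on `S`: `B ≤ 0` on its kernel.
lemma finrank_le_four_of_posDefOn {S : Submodule ℝ V6} (hS : PosDefOn Bₗ S) :
    finrank ℝ S ≤ 4 := by
  let π : V6 →ₗ[ℝ] Fin 4 → ℝ := LinearMap.funLeft ℝ ℝ (Fin.castLE (by norm_num))
  refine (LinearMap.finrank_le_finrank_of_injective (f := π.domRestrict S) ?_).trans (by simp)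
  refine (injective_iff_map_eq_zero _).mpr fun ⟨x, hx⟩ hπ => ?_
  by_contra hx0
  have hxS := hS x hx fun h => hx0 (by simp [h])
  have hcoord (i : Fin 4) : x (Fin.castLE (by norm_num) i) = 0 := congrFun hπ i
  have h0 : x 0 = 0 := hcoord 0
  have h1 : x 1 = 0 := hcoord 1
  have h2 : x 2 = 0 := hcoord 2
  have h3 : x 3 = 0 := hcoord 3
  simp only [Bₗ_apply, B] at hxS
  nlinarith [sq_nonneg (x 4), sq_nonneg (x 5)]

lemma finrank_le_two_of_posDefOn_neg {S : Submodule ℝ V6} (hS : PosDefOn (-Bₗ) S) :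
    finrank ℝ S ≤ 2 := by
  let π : V6 →ₗ[ℝ] Fin 2 → ℝ := LinearMap.funLeft ℝ ℝ (Fin.natAdd 4)
  refine (LinearMap.finrank_le_finrank_of_injective (f := π.domRestrict S) ?_).trans (by simp)
  refine (injective_iff_map_eq_zero _).mpr fun ⟨x, hx⟩ hπ => ?_
  by_contra hx0
  have hxS := hS x hx fun h => hx0 (by simp [h])
  have hcoord (i : Fin 2) : x (Fin.natAdd 4 i) = 0 := congrFun hπ i
  have h4 : x 4 = 0 := hcoord 0
  have h5 : x 5 = 0 := hcoord 1
  simp only [LinearMap.neg_apply, Bₗ_apply, B] at hxS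
  nlinarith [sq_nonneg (x 0), sq_nonneg (x 1), sq_nonneg (x 2), sq_nonneg (x 3)]

lemma card_le_four_of_isOrthoᵢ {ι : Type*} [Fintype ι] {e : ι → V6} (ho : Bₗ.IsOrthoᵢ e)
    (he : ∀ i, B (e i) (e i) = 1) : Fintype.card ι ≤ 4 := by
  rw [← finrank_span_of_isOrthoᵢ ho fun i => by simp [he]]
  exact finrank_le_four_of_posDefOn (posDefOn_span_of_isOrthoᵢ ho he)

lemma card_le_two_of_isOrthoᵢ_neg {ι : Type*} [Fintype ι] {e : ι → V6} (ho : Bₗ.IsOrthoᵢ e)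
    (he : ∀ i, B (e i) (e i) = -1) : Fintype.card ι ≤ 2 := by
  have ho' : (-Bₗ).IsOrthoᵢ e := fun i j hij => neg_eq_zero.mpr (ho hij)
  rw [← finrank_span_of_isOrthoᵢ ho fun i => by simp [he]]
  exact finrank_le_two_of_posDefOn_neg (posDefOn_span_of_isOrthoᵢ ho' fun i => by simp [he])

lemma range_vecCons_three (u v w : V6) : Set.range ![u, v, w] = {u, v, w} := by
  ext; simp [eq_comm]; tauto

lemma isOrthoᵢ_three {u v w : V6} (huv : B u v = 0) (huw : B u w = 0) (hvw : B v w = 0) :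
    Bₗ.IsOrthoᵢ ![u, v, w] := by
  simp [isOrthoᵢ_vecCons Bₗ_isSymm, Fin.forall_fin_succ, huv, huw, hvw]

lemma finrank_span_three {u v w : V6} (huu : B u u ≠ 0) (hvv : B v v ≠ 0) (hww : B w w ≠ 0)
    (huv : B u v = 0) (huw : B u w = 0) (hvw : B v w = 0) :
    finrank ℝ (span ℝ {u, v, w}) = 3 := by
  rw [← range_vecCons_three, finrank_span_of_isOrthoᵢ (isOrthoᵢ_three huv huw hvw)
    (by simp [Fin.forall_fin_succ, huu, hvv, hww]), Fintype.card_fin]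

lemma IsSig21.finrank_eq {D : Submodule ℝ V6} (hD : IsSig21 D) : finrank ℝ D = 3 := by
  obtain ⟨u, v, w, rfl, huu, hvv, hww, huv, huw, hvw⟩ := hD
  exact finrank_span_three (by simp [huu]) (by simp [hvv]) (by simp [hww]) huv huw hvw

lemma isSig21_of_orthonormal {D : Submodule ℝ V6} (hD : finrank ℝ D = 3) {u v w : V6}
    (hu : u ∈ D) (hv : v ∈ D) (hw : w ∈ D) (huu : B u u = 1) (hvv : B v v = 1) (hww : B w w = -1)
    (huv : B u v = 0) (huw : B u w = 0) (hvw : B v w = 0) : IsSig21 D := by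
  refine ⟨u, v, w, (eq_of_le_of_finrank_eq ?_ ?_).symm, huu, hvv, hww, huv, huw, hvw⟩
  · simp [span_le, Set.insert_subset_iff, hu, hv, hw]
  · rw [finrank_span_three (by simp [huu]) (by simp [hvv]) (by simp [hww]) huv huw hvw, hD]

lemma IsSig21.finrank_le_one_of_isotropic {D T : Submodule ℝ V6} (hD : IsSig21 D) (hT : T ≤ D)
    (hiso : ∀ x ∈ T, B x x = 0) : finrank ℝ T ≤ 1 := by
  have hD3 := hD.finrank_eq
  obtain ⟨u, v, w, rfl, huu, hvv, hww, huv, huw, hvw⟩ := hD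
  have ho : Bₗ.IsOrthoᵢ ![u, v] := by simp [isOrthoᵢ_vecCons Bₗ_isSymm, huv]
  set P := span ℝ (Set.range ![u, v])
  have hP : PosDefOn Bₗ P :=
    posDefOn_span_of_isOrthoᵢ ho (by simp [Fin.forall_fin_succ, huu, hvv])
  have hP2 : finrank ℝ P = 2 :=
    finrank_span_of_isOrthoᵢ ho (by simp [Fin.forall_fin_succ, huu, hvv])
  have hTP : T ⊓ P = ⊥ := eq_bot_iff.mpr fun x ⟨hxT, hxP⟩ =>
    (mem_bot ℝ).mpr <| by_contra fun hx0 => (hP x hxP hx0).ne' (hiso x hxT)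
  have hle : T ⊔ P ≤ span ℝ {u, v, w} :=
    sup_le hT (span_mono (by simp [Set.subset_def]))
  have hsum := finrank_sup_add_finrank_inf_eq T P
  have hsup := finrank_mono hle
  rw [hTP, finrank_bot] at hsum
  omega

lemma IsSig21.disjoint_orthogonal {W : Submodule ℝ V6} (hW : IsSig21 W) :
    Disjoint W (Bₗ.orthogonal W) := by
  obtain ⟨u, v, w, rfl, huu, hvv, hww, huv, huw, hvw⟩ := hW
  rw [← range_vecCons_three]
  exact disjoint_orthogonal_span_of_isOrthoᵢ (isOrthoᵢ_three huv huw hvw)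
    (by simp [Fin.forall_fin_succ, huu, hvv, hww])

lemma IsSig21.orthogonal {W : Submodule ℝ V6} (hW : IsSig21 W) : IsSig21 (Bₗ.orthogonal W) := by
  set D := Bₗ.orthogonal W
  have hD3 : finrank ℝ D = 3 := by
    rw [LinearMap.BilinForm.finrank_orthogonal Bₗ_nondegenerate, hW.finrank_eq]; simp
  have hDW : Disjoint D (Bₗ.orthogonal D) := by
    rw [LinearMap.BilinForm.orthogonal_orthogonal Bₗ_nondegenerate Bₗ_isSymm.isRefl]
    exact hW.disjoint_orthogonal.symm
  obtain ⟨e, ho, hsign⟩ := exists_isOrthoᵢ_sign (Bₗ_isSymm.restrict D)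
    (Bₗ.nondegenerate_restrict_of_disjoint_orthogonal Bₗ_isSymm.isRefl hDW) hD3
  let x i : V6 := e i
  have hxD i : x i ∈ D := (e i).2
  have hxo {i j} (hij : i ≠ j) : B (x i) (x j) = 0 := ho hij
  have hxs i : B (x i) (x i) = 1 ∨ B (x i) (x i) = -1 := hsign i
  obtain ⟨u, v, w, rfl, huu, hvv, hww, huv, huw, hvw⟩ := hW
  have hperp {y} (hy : y ∈ span ℝ {u, v, w}) i : B y (x i) = 0 := hxD i y hy
  have hu i := hperp (subset_span (by simp) : u ∈ _) i
  have hv i := hperp (subset_span (by simp) : v ∈ _) i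
  have hw i := hperp (subset_span (by simp) : w ∈ _) i
  have no_three_pos (h0 : B (x 0) (x 0) = 1) (h1 : B (x 1) (x 1) = 1) (h2 : B (x 2) (x 2) = 1) :
      False := by
    have := card_le_four_of_isOrthoᵢ (e := ![u, v, x 0, x 1, x 2])
      (by simp [isOrthoᵢ_vecCons Bₗ_isSymm, Fin.forall_fin_succ, huv, hu, hv,
        hxo (show (0 : Fin 3) ≠ 1 by decide), hxo (show (0 : Fin 3) ≠ 2 by decide),
        hxo (show (1 : Fin 3) ≠ 2 by decide)])
      (by simp [Fin.forall_fin_succ, huu, hvv, h0, h1, h2])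
    simp at this
  have no_two_neg {i j} (hij : i ≠ j) (hi : B (x i) (x i) = -1) (hj : B (x j) (x j) = -1) :
      False := by
    have := card_le_two_of_isOrthoᵢ_neg (e := ![w, x i, x j])
      (by simp [isOrthoᵢ_vecCons Bₗ_isSymm, Fin.forall_fin_succ, hw, hxo hij])
      (by simp [Fin.forall_fin_succ, hww, hi, hj])
    simp at this
  rcases hxs 0 with h0 | h0 <;> rcases hxs 1 with h1 | h1 <;> rcases hxs 2 with h2 | h2
  · exact (no_three_pos h0 h1 h2).elim
  · exact isSig21_of_orthonormal hD3 (hxD 0) (hxD 1) (hxD 2) h0 h1 h2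
      (hxo (by decide)) (hxo (by decide)) (hxo (by decide))
  · exact isSig21_of_orthonormal hD3 (hxD 0) (hxD 2) (hxD 1) h0 h2 h1
      (hxo (by decide)) (hxo (by decide)) (hxo (by decide))
  · exact (no_two_neg (by decide : (1 : Fin 3) ≠ 2) h1 h2).elim
  · exact isSig21_of_orthonormal hD3 (hxD 1) (hxD 2) (hxD 0) h1 h2 h0
      (hxo (by decide)) (hxo (by decide)) (hxo (by decide))
  · exact (no_two_neg (by decide : (0 : Fin 3) ≠ 2) h0 h2).elim
  all_goals exact (no_two_neg (by decide : (0 : Fin 3) ≠ 1) h0 h1).elim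

lemma isDupin_orthogonal {E : Submodule ℝ V6} (hE : IsSig21 E) : IsDupin (Bₗ.orthogonal E) E := by
  refine ⟨hE.orthogonal, hE, fun x => ?_⟩
  conv_lhs => rw [← LinearMap.BilinForm.orthogonal_orthogonal Bₗ_nondegenerate Bₗ_isSymm.isRefl E]
  simp [B_comm x]

lemma IsContact.le_orthogonal {W S T : Submodule ℝ V6} (hW : IsContact W) (hS : S ≤ W)
    (hT : T ≤ W) : T ≤ Bₗ.orthogonal S :=
  fun y hy x hx => hW.2 x (hS hx) y (hT hy)

lemma le_orthogonal_iSup {ι : Sort*} {S : Submodule ℝ V6} {T : ι → Submodule ℝ V6}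
    (h : ∀ i, T i ≤ Bₗ.orthogonal S) : S ≤ Bₗ.orthogonal (⨆ i, T i) :=
  fun x hx y hy => (B_comm y x).trans (iSup_le h hy x hx)

lemma sPlus_succ_eq_of_le {f : ℤ × ℤ → Submodule ℝ V6} (hf : IsLegendre f)
    {D : Submodule ℝ V6} (hD : IsSig21 D) {m n : ℤ} (h₀ : sPlus f m n ≤ D)
    (h₁ : sPlus f (m + 1) n ≤ D) : sPlus f (m + 1) n = sPlus f m n := by
  have hT : finrank ℝ ↥(f (m + 1, n) ⊓ D) ≤ 1 :=
    hD.finrank_le_one_of_isotropic inf_le_right fun x hx => (hf.1 _).2 x hx.1 x hx.1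
  have h₀T : sPlus f m n ≤ f (m + 1, n) ⊓ D := le_inf inf_le_right h₀
  have h₁T : sPlus f (m + 1) n ≤ f (m + 1, n) ⊓ D := le_inf inf_le_left h₁
  exact (eq_of_le_of_finrank_le h₁T (by rwa [hf.2.1])).trans
    (eq_of_le_of_finrank_le h₀T (by rwa [hf.2.1])).symm

/-- A discrete Legendre map (whose vertical curvature spheres span
3-dimensional subspaces along each `+`-coordinate ribbon) is a discrete channel surface with
circular direction `+` if and only if the horizontal curvature spheres are constant along each
`+`-coordinate line and the vertical curvature spheres along each `+`-coordinate ribbon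
determine a `(2,1)`-plane. -/
theorem channel_surface_iff_curvature_sphere_data
    (f : ℤ × ℤ → Submodule ℝ V6) (hf : IsLegendre f)
    (hdim : ∀ n : ℤ, Module.finrank ℝ ↥(⨆ m : ℤ, sMinus f m n) = 3) :
    IsChannelPlus f ↔
      ((∀ m m' n : ℤ, sPlus f m n = sPlus f m' n) ∧
        ∀ n : ℤ, IsSig21 (⨆ m : ℤ, sMinus f m n)) := by
  constructor
  · rintro ⟨-, D, E, hcong, hconst⟩
    refine ⟨fun m m' n => ?_, fun n => ?_⟩
    · have hper : Function.Periodic (fun k => sPlus f k n) 1 := fun k =>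
        sPlus_succ_eq_of_le hf (hcong k n).1.1 (hcong k n).2.1
          ((hcong (k + 1) n).2.1.trans (hconst (k + 1) k n).1.le)
      simpa using (hper.int_mul_eq m).trans (hper.int_mul_eq m').symm
    · have hle : (⨆ m, sMinus f m n) ≤ E (0, n) :=
        iSup_le fun m => (hcong m n).2.2.2.1.trans (hconst m 0 n).2.le
      have hE := (hcong 0 n).1.2.1
      rwa [eq_of_le_of_finrank_eq hle (by rw [hdim n, hE.finrank_eq])]
  · rintro ⟨hconst, hsig⟩
    refine ⟨hf, fun p => Bₗ.orthogonal (⨆ m, sMinus f m p.2), fun p => ⨆ m, sMinus f m p.2,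
      fun m n => ⟨isDupin_orthogonal (hsig n), ?_, ?_, le_iSup (sMinus f · n) m,
        le_iSup (sMinus f · n) (m + 1)⟩, fun _ _ _ => ⟨rfl, rfl⟩⟩
    · exact le_orthogonal_iSup fun m' =>
        (hf.1 (m', n)).le_orthogonal ((hconst m m' n).le.trans inf_le_left) inf_le_left
    · exact le_orthogonal_iSup fun m' =>
        (hf.1 (m', n + 1)).le_orthogonal ((hconst m m' (n + 1)).le.trans inf_le_left) inf_le_right
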